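/- Let ρ be a finite Borel measure on ℝ² supported on a set S, L a line through the origin with unit vector u, and suppose the orthogonal projection x ↦ u·x is injective on S up to a ρ-null set. Then Λ ⊆ ℝ is a spectrum of the pushforward measure π_Lρ (the image of ρ under x ↦ u·x) if and only if Λu = {λu : λ ∈ Λ} is a spectrum of ρ. -/

import Mathlib

open MeasureTheory Real Complex
open scoped ENNReal

def IsSpectrum1 (ν : Measure ℝ) (Λ : Set ℝ) : Prop :=
  Λ.Countable ∧
  (∀ γ₁ ∈ Λ, ∀ γ₂ ∈ Λ, γ₁ ≠ γ₂ →
    ∫ x, Complex.exp (2 * (π : ℂ) * Complex.I * (((γ₁ - γ₂) * x : ℝ) : ℂ)) ∂ν = 0) ∧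
  (∀ f : ℝ → ℂ, MemLp f 2 ν →
    (∀ γ ∈ Λ, ∫ x, f x * Complex.exp (-2 * (π : ℂ) * Complex.I * ((γ * x : ℝ) : ℂ)) ∂ν = 0) →
    f =ᵐ[ν] 0)

def IsSpectrum2 (ν : Measure (ℝ × ℝ)) (Λ : Set (ℝ × ℝ)) : Prop :=
  Λ.Countable ∧
  (∀ γ₁ ∈ Λ, ∀ γ₂ ∈ Λ, γ₁ ≠ γ₂ →
    ∫ x, Complex.exp (2 * (π : ℂ) * Complex.I *
      (((γ₁.1 - γ₂.1) * x.1 + (γ₁.2 - γ₂.2) * x.2 : ℝ) : ℂ)) ∂ν = 0) ∧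
  (∀ f : ℝ × ℝ → ℂ, MemLp f 2 ν →
    (∀ γ ∈ Λ, ∫ x, f x * Complex.exp (-2 * (π : ℂ) * Complex.I *
      ((γ.1 * x.1 + γ.2 * x.2 : ℝ) : ℂ)) ∂ν = 0) →
    f =ᵐ[ν] 0)

theorem stmt9 (ρ : Measure (ℝ × ℝ)) [IsFiniteMeasure ρ]
    (u : ℝ × ℝ) (hu : u.1 ^ 2 + u.2 ^ 2 = 1)
    (S : Set (ℝ × ℝ)) (hS : ρ Sᶜ = 0)
    (hinj : ∃ N : Set (ℝ × ℝ), ρ N = 0 ∧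
      Set.InjOn (fun x : ℝ × ℝ => u.1 * x.1 + u.2 * x.2) (S \ N))
    (Λ : Set ℝ) :
    IsSpectrum1 (ρ.map (fun x : ℝ × ℝ => u.1 * x.1 + u.2 * x.2)) Λ ↔
      IsSpectrum2 ρ ((fun l : ℝ => (l * u.1, l * u.2)) '' Λ) := by
  classical
  set P : ℝ × ℝ → ℝ := fun x => u.1 * x.1 + u.2 * x.2 with hPdef
  have hPm : Measurable P := (measurable_fst.const_mul u.1).add (measurable_snd.const_mul u.2)
  set ν : Measure ℝ := ρ.map P with hνdef
  have hmulinj : Function.Injective (fun l : ℝ => (l * u.1, l * u.2)) := by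
    intro a b h
    have h1 : a * u.1 = b * u.1 := congrArg Prod.fst h
    have h2 : a * u.2 = b * u.2 := congrArg Prod.snd h
    linear_combination u.1 * h1 + u.2 * h2 + (b - a) * hu
  have hexpc : ∀ c : ℝ, Continuous (fun t : ℝ =>
      Complex.exp (2 * (π : ℂ) * Complex.I * ((c * t : ℝ) : ℂ))) := by
    intro c
    fun_prop
  have hexpc' : ∀ c : ℝ, Continuous (fun t : ℝ =>
      Complex.exp (-2 * (π : ℂ) * Complex.I * ((c * t : ℝ) : ℂ))) := by
    intro c
    fun_prop
  constructor
  · rintro ⟨hc, horth, hcomp⟩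
    refine ⟨hc.image _, ?_, ?_⟩
    · rintro γ₁ ⟨l₁, hl₁, rfl⟩ γ₂ ⟨l₂, hl₂, rfl⟩ hne
      have hlne : l₁ ≠ l₂ := fun h => hne (by rw [h])
      have h0 := horth l₁ hl₁ l₂ hl₂ hlne
      rw [hνdef, integral_map hPm.aemeasurable (hexpc (l₁ - l₂)).aestronglyMeasurable] at h0
      rw [← h0]
      refine integral_congr_ae (Filter.Eventually.of_forall fun x => ?_)
      beta_reduce
      congr 1
      simp only [hPdef]
      push_cast
      ring
    · intro f hf hforth
      obtain ⟨N, hN0, hNinj⟩ := hinj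
      set T : Set (ℝ × ℝ) := (toMeasurable ρ Sᶜ)ᶜ \ toMeasurable ρ N with hTdef
      have hTm : MeasurableSet T :=
        (measurableSet_toMeasurable ρ Sᶜ).compl.diff (measurableSet_toMeasurable ρ N)
      have hTc : ρ Tᶜ = 0 := by
        have hTceq : Tᶜ = toMeasurable ρ Sᶜ ∪ toMeasurable ρ N := by
          rw [hTdef, Set.diff_eq, Set.compl_inter, compl_compl, compl_compl]
        rw [hTceq]
        refine le_antisymm (le_trans (measure_union_le _ _) ?_) zero_le
        rw [measure_toMeasurable, measure_toMeasurable, hS, hN0]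
        simp
      have hTsub : T ⊆ S \ N := by
        intro x hx
        constructor
        · by_contra hxS
          exact hx.1 (subset_toMeasurable ρ Sᶜ hxS)
        · exact fun hxN => hx.2 (subset_toMeasurable ρ N hxN)
      have hTinj : Set.InjOn P T := hNinj.mono hTsub
      haveI : StandardBorelSpace T := hTm.standardBorel
      have hem : Measurable (fun x : T => P ↑x) := hPm.comp measurable_subtype_coe
      have heinj : Function.Injective (fun x : T => P ↑x) := fun a b h =>
        Subtype.ext (hTinj a.2 b.2 h)
      have hemb : MeasurableEmbedding (fun x : T => P ↑x) := hem.measurableEmbedding heinj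
      obtain ⟨f₁, hf₁sm, hff₁⟩ := hf.1
      obtain ⟨g, hgm, hge⟩ := hemb.exists_measurable_extend
        (hf₁sm.measurable.comp measurable_subtype_coe : Measurable fun x : T => f₁ ↑x)
        (fun _ => ⟨0⟩)
      have hT_ae : ∀ᵐ x ∂ρ, x ∈ T := by
        rw [ae_iff]
        exact hTc
      have hgf : (fun x => g (P x)) =ᵐ[ρ] f := by
        filter_upwards [hT_ae, hff₁] with x hxT hfx
        have h := congrFun hge ⟨x, hxT⟩
        simp only [Function.comp_apply] at h
        rw [hfx]
        exact h
      have hgsm : AEStronglyMeasurable g ν := hgm.stronglyMeasurable.aestronglyMeasurable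
      have hgl : MemLp g 2 ν := by
        rw [hνdef] at hgsm ⊢
        rw [memLp_map_measure_iff hgsm hPm.aemeasurable]
        exact hf.ae_eq hgf.symm
      have horthg : ∀ γ ∈ Λ, ∫ t, g t *
          Complex.exp (-2 * (π : ℂ) * Complex.I * ((γ * t : ℝ) : ℂ)) ∂ν = 0 := by
        intro γ hγ
        have hmeas : AEStronglyMeasurable (fun t : ℝ => g t *
            Complex.exp (-2 * (π : ℂ) * Complex.I * ((γ * t : ℝ) : ℂ))) (ρ.map P) :=
          (hgm.mul (hexpc' γ).measurable).stronglyMeasurable.aestronglyMeasurable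
        rw [hνdef, integral_map hPm.aemeasurable hmeas]
        have h0 := hforth (γ * u.1, γ * u.2) ⟨γ, hγ, rfl⟩
        rw [← h0]
        refine integral_congr_ae ?_
        filter_upwards [hgf] with x hx
        have hx' : g (P x) = f x := hx
        rw [hx']
        congr 1
        congr 1
        simp only [hPdef]
        push_cast
        ring
      have hg0 : ∀ᵐ t ∂ν, g t = 0 := hcomp g hgl horthg
      have hset : MeasurableSet {t : ℝ | g t = 0} := hgm (measurableSet_singleton 0)
      have hg0' : ∀ᵐ x ∂ρ, g (P x) = 0 := by
        rw [hνdef] at hg0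
        exact (ae_map_iff hPm.aemeasurable hset).mp hg0
      filter_upwards [hgf, hg0'] with x h1 h2
      have h1' : g (P x) = f x := h1
      rw [← h1']
      exact h2
  · rintro ⟨hc, horth, hcomp⟩
    refine ⟨(hc.preimage hmulinj).mono (Set.subset_preimage_image _ _), ?_, ?_⟩
    · intro γ₁ h₁ γ₂ h₂ hne
      have h0 := horth (γ₁ * u.1, γ₁ * u.2) ⟨γ₁, h₁, rfl⟩ (γ₂ * u.1, γ₂ * u.2)
        ⟨γ₂, h₂, rfl⟩ (fun h => hne (hmulinj h))
      rw [hνdef, integral_map hPm.aemeasurable (hexpc (γ₁ - γ₂)).aestronglyMeasurable]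
      rw [← h0]
      refine integral_congr_ae (Filter.Eventually.of_forall fun x => ?_)
      beta_reduce
      congr 1
      simp only [hPdef]
      push_cast
      ring
    · intro g hg hgorth
      obtain ⟨g₁, hg₁sm, hgg₁⟩ := hg.1
      have hfl : MemLp (fun x : ℝ × ℝ => g₁ (P x)) 2 ρ := by
        have h1 : MemLp g₁ 2 ν := hg.ae_eq hgg₁
        rw [hνdef] at h1
        exact (memLp_map_measure_iff hg₁sm.aestronglyMeasurable hPm.aemeasurable).mp h1
      have horthf : ∀ γ ∈ (fun l : ℝ => (l * u.1, l * u.2)) '' Λ,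
          ∫ x, g₁ (P x) * Complex.exp (-2 * (π : ℂ) * Complex.I *
            ((γ.1 * x.1 + γ.2 * x.2 : ℝ) : ℂ)) ∂ρ = 0 := by
        rintro γ ⟨l, hl, rfl⟩
        have hmeas : AEStronglyMeasurable (fun t : ℝ => g₁ t *
            Complex.exp (-2 * (π : ℂ) * Complex.I * ((l * t : ℝ) : ℂ))) (ρ.map P) :=
          (hg₁sm.measurable.mul (hexpc' l).measurable).stronglyMeasurable.aestronglyMeasurable
        have h3 : ∫ t, g₁ t * Complex.exp (-2 * (π : ℂ) * Complex.I * ((l * t : ℝ) : ℂ)) ∂ν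
            = 0 := by
          rw [← hgorth l hl]
          exact integral_congr_ae (hgg₁.symm.mul (Filter.EventuallyEq.refl _ _))
        rw [hνdef, integral_map hPm.aemeasurable hmeas] at h3
        rw [← h3]
        refine integral_congr_ae (Filter.Eventually.of_forall fun x => ?_)
        beta_reduce
        congr 1
        congr 1
        simp only [hPdef]
        push_cast
        ring
      have hf0 : ∀ᵐ x ∂ρ, g₁ (P x) = 0 := hcomp _ hfl horthf
      have hset : MeasurableSet {t : ℝ | g₁ t = 0} := hg₁sm.measurable (measurableSet_singleton 0)
      have hg10 : ∀ᵐ t ∂ν, g₁ t = 0 := by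
        rw [hνdef]
        exact (ae_map_iff hPm.aemeasurable hset).mpr hf0
      filter_upwards [hgg₁, hg10] with t h1 h2
      rw [h1]
      exact h2
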